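/- Let G be an unweighted, connected simple graph on n ≥ 2 vertices, v a vertex, and r ≥ 1 an integer such that vol(B(v,r)) ≤ vol(V)/2. Then Σ_{i=0}^{r−1} φ(B(v,i)) ≤ 2 · log(vol(B(v,r))) ≤ 4 · log n, where log denotes the natural logarithm. -/

import Mathlib

open Finset Real

variable {V : Type*} [Fintype V] [DecidableEq V]

/-- The normalized Laplacian `I - D^{-1/2} A D^{-1/2}` of a simple graph. -/
noncomputable def normLap (G : SimpleGraph V) [DecidableRel G.Adj] : Matrix V V ℝ :=
  1 - Matrix.diagonal (fun v => (Real.sqrt (G.degree v))⁻¹) * G.adjMatrix ℝ *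
    Matrix.diagonal (fun v => (Real.sqrt (G.degree v))⁻¹)

lemma normLap_isHermitian (G : SimpleGraph V) [DecidableRel G.Adj] :
    (normLap G).IsHermitian := by
  unfold normLap
  apply Matrix.IsHermitian.sub (Matrix.isHermitian_one)
  rw [Matrix.IsHermitian, Matrix.conjTranspose_eq_transpose_of_trivial,
    Matrix.transpose_mul, Matrix.transpose_mul, Matrix.diagonal_transpose,
    G.transpose_adjMatrix, Matrix.mul_assoc]

/-- The `k`-th smallest eigenvalue (1-indexed) of the normalized Laplacian. -/
noncomputable def normLapEigenvalue (G : SimpleGraph V) [DecidableRel G.Adj]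
    (k : ℕ) (hk : k - 1 < Fintype.card V) : ℝ :=
  let f : Fin (Fintype.card V) → ℝ :=
    (normLap_isHermitian G).eigenvalues ∘ (Fintype.equivFin V).symm
  (f ∘ Tuple.sort f) ⟨k - 1, hk⟩

/-- Volume of a set of vertices: sum of degrees. -/
def vol (G : SimpleGraph V) [DecidableRel G.Adj] (S : Finset V) : ℕ :=
  ∑ v ∈ S, G.degree v

/-- Number of edges with exactly one endpoint in `S`. -/
def cut (G : SimpleGraph V) [DecidableRel G.Adj] (S : Finset V) : ℕ :=
  ((S ×ˢ Sᶜ).filter fun p => G.Adj p.1 p.2).card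

/-- Conductance of a set of vertices. -/
noncomputable def conductance (G : SimpleGraph V) [DecidableRel G.Adj] (S : Finset V) : ℝ :=
  (cut G S : ℝ) / min (vol G S) (vol G Sᶜ)

/-- Ball of radius `r` around a vertex in graph distance. -/
noncomputable def ball (G : SimpleGraph V) (v : V) (r : ℕ) : Finset V :=
  Finset.univ.filter fun u => G.dist v u ≤ r

/-- Set of vertices at distance at most `r` from a set `S`. -/
noncomputable def ballSet (G : SimpleGraph V) (S : Finset V) (r : ℕ) : Finset V :=
  Finset.univ.filter fun u => ∃ w ∈ S, G.dist w u ≤ r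

/-- Exterior neighborhood of `S`: vertices outside `S` adjacent to some vertex of `S`. -/
def nbhd (G : SimpleGraph V) [DecidableRel G.Adj] (S : Finset V) : Finset V :=
  Finset.univ.filter fun u => u ∉ S ∧ ∃ w ∈ S, G.Adj w u


/-!
Write `b i = vol(B(v,i))`. Every edge leaving `B(v,i)` ends in the shell `B(v,i+1) \ B(v,i)`, so
`|E(B(v,i), B(v,i)ᶜ)| ≤ min (b i) (b (i+1) - b i)`, and as `b i ≤ vol(V)/2` the conductance of
`B(v,i)` is at most `min 1 (x - 1)` with `x = b (i+1) / b i`. The elementary bound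
`min 1 (x - 1) ≤ 2 log x` makes the sum telescope to `2 (log (b r) - log (b 0)) ≤ 2 log (b r)`,
and `b r ≤ vol(V) ≤ n²` gives the second inequality.
-/

lemma min_one_sub_one_le_two_mul_log {x : ℝ} (hx : 1 ≤ x) : min 1 (x - 1) ≤ 2 * log x := by
  have hx0 : 0 < x := by linarith
  rcases le_or_gt x 2 with hx2 | hx2
  · have hlog : 1 - x⁻¹ ≤ log x := one_sub_inv_le_log_of_pos hx0
    have hquad : x - 1 ≤ 2 * (1 - x⁻¹) := by
      rw [mul_sub, mul_one, ← div_eq_mul_inv, le_sub_iff_add_le, ← le_sub_iff_add_le',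
        div_le_iff₀ hx0]
      nlinarith
    linarith [min_le_right (1 : ℝ) (x - 1)]
  · have hlog : log 2 ≤ log x := log_le_log (by norm_num) hx2.le
    linarith [min_le_left (1 : ℝ) (x - 1), log_two_gt_d9]

omit [DecidableEq V] in
lemma ball_mono (G : SimpleGraph V) (v : V) {i j : ℕ} (h : i ≤ j) : ball G v i ⊆ ball G v j :=
  fun u hu => by
    simp only [ball, mem_filter, mem_univ, true_and] at hu ⊢
    omega

omit [DecidableEq V] in
lemma mem_ball_self (G : SimpleGraph V) (v : V) (i : ℕ) : v ∈ ball G v i := by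
  simp [ball]

section

variable (G : SimpleGraph V) [DecidableRel G.Adj]

omit [DecidableEq V] in
lemma vol_mono {S T : Finset V} (h : S ⊆ T) : vol G S ≤ vol G T :=
  sum_le_sum_of_subset h

lemma vol_add_vol_compl (S : Finset V) : vol G S + vol G Sᶜ = vol G univ :=
  sum_add_sum_compl S _

omit [DecidableEq V] in
lemma vol_univ_le_card_sq : vol G univ ≤ Fintype.card V ^ 2 :=
  calc vol G univ ≤ ∑ _u : V, Fintype.card V :=
        sum_le_sum fun u _ => (G.degree_lt_card_verts u).le
    _ = Fintype.card V ^ 2 := by simp [sq]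

lemma vol_le_vol_compl_of_le_half {S : Finset V} (h : (vol G S : ℝ) ≤ vol G univ / 2) :
    vol G S ≤ vol G Sᶜ := by
  have hsum : (vol G S : ℝ) + vol G Sᶜ = vol G univ := mod_cast vol_add_vol_compl G S
  exact_mod_cast (by linarith : (vol G S : ℝ) ≤ vol G Sᶜ)

lemma cut_le_vol (S : Finset V) : cut G S ≤ vol G S :=
  calc cut G S ≤ #(S.biUnion fun w => {w} ×ˢ G.neighborFinset w) := by
        refine card_le_card fun p hp => ?_
        simp only [mem_filter, mem_product] at hp
        simp only [mem_biUnion, mem_product, mem_singleton, SimpleGraph.mem_neighborFinset]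
        exact ⟨p.1, hp.1.1, rfl, hp.2⟩
    _ ≤ ∑ w ∈ S, #({w} ×ˢ G.neighborFinset w) := card_biUnion_le
    _ = vol G S := by simp [vol]

lemma cut_le_vol_nbhd (S : Finset V) : cut G S ≤ vol G (nbhd G S) :=
  calc cut G S ≤ #((nbhd G S).biUnion fun u => G.neighborFinset u ×ˢ {u}) := by
        refine card_le_card fun p hp => ?_
        simp only [mem_filter, mem_product, mem_compl] at hp
        simp only [mem_biUnion, mem_product, mem_singleton, SimpleGraph.mem_neighborFinset,
          nbhd, mem_filter, mem_univ, true_and]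
        exact ⟨p.2, ⟨hp.1.2, p.1, hp.1.1, hp.2⟩, hp.2.symm, rfl⟩
    _ ≤ ∑ u ∈ nbhd G S, #(G.neighborFinset u ×ˢ {u}) := card_biUnion_le
    _ = vol G (nbhd G S) := by simp [vol]

lemma conductance_eq_cut_div_vol {S : Finset V} (h : vol G S ≤ vol G Sᶜ) :
    conductance G S = cut G S / vol G S := by
  rw [conductance, min_eq_left (by exact_mod_cast h)]

lemma conductance_le_two_mul_log_sub {S T : Finset V} (hpos : 0 < vol G S)
    (hle : vol G S ≤ vol G Sᶜ) (hT : cut G S + vol G S ≤ vol G T) :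
    conductance G S ≤ 2 * (log (vol G T) - log (vol G S)) := by
  have hb : (0 : ℝ) < vol G S := mod_cast hpos
  have hab : (vol G S : ℝ) ≤ vol G T := mod_cast (Nat.le_add_left _ _).trans hT
  have hcut : (cut G S : ℝ) ≤ min (vol G S : ℝ) (vol G T - vol G S) := by
    refine le_min (mod_cast cut_le_vol G S) ?_
    have : (cut G S : ℝ) + vol G S ≤ vol G T := mod_cast hT
    linarith
  rw [conductance_eq_cut_div_vol G hle, ← log_div (by linarith) hb.ne']
  calc (cut G S : ℝ) / vol G S ≤ min (vol G S : ℝ) (vol G T - vol G S) / vol G S := by gcongr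
    _ = min 1 ((vol G T : ℝ) / vol G S - 1) := by
        rw [← min_div_div_right hb.le, div_self hb.ne', sub_div, div_self hb.ne']
    _ ≤ 2 * log ((vol G T : ℝ) / vol G S) :=
        min_one_sub_one_le_two_mul_log ((one_le_div hb).mpr hab)

lemma nbhd_ball_subset (v : V) (i : ℕ) :
    nbhd G (ball G v i) ⊆ ball G v (i + 1) \ ball G v i := fun u hu => by
  simp only [nbhd, ball, mem_filter, mem_univ, true_and, mem_sdiff, not_le] at hu ⊢
  obtain ⟨hu, w, hw, hwu⟩ := hu
  refine ⟨?_, hu⟩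
  rcases hwu.diff_dist_adj (u := v) with h | h | h <;> omega

lemma cut_ball_add_vol_le (v : V) (i : ℕ) :
    cut G (ball G v i) + vol G (ball G v i) ≤ vol G (ball G v (i + 1)) :=
  calc cut G (ball G v i) + vol G (ball G v i)
      ≤ vol G (ball G v (i + 1) \ ball G v i) + vol G (ball G v i) :=
        Nat.add_le_add_right ((cut_le_vol_nbhd G _).trans (vol_mono G (nbhd_ball_subset G v i))) _
    _ = vol G (ball G v (i + 1)) := sum_sdiff (ball_mono G v i.le_succ)

omit [DecidableEq V] in
lemma vol_ball_pos [Nontrivial V] (hG : G.Preconnected) (v : V) (i : ℕ) :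
    0 < vol G (ball G v i) :=
  (hG.degree_pos_of_nontrivial v).trans_le
    (single_le_sum (f := fun u => G.degree u) (fun _ _ => Nat.zero_le _) (mem_ball_self G v i))

end

theorem sum_conductance_balls_le_general (G : SimpleGraph V) [DecidableRel G.Adj] (hG : G.Connected)
    (hn : 2 ≤ Fintype.card V) (v : V) (r : ℕ)
    (hvol : (vol G (ball G v r) : ℝ) ≤ (vol G Finset.univ : ℝ) / 2) :
    (∑ i ∈ Finset.range r, conductance G (ball G v i)) ≤
        2 * Real.log (vol G (ball G v r)) ∧
      2 * Real.log (vol G (ball G v r)) ≤ 4 * Real.log (Fintype.card V) := by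
  have : Nontrivial V := Fintype.one_lt_card_iff_nontrivial.mp hn
  have hpos := vol_ball_pos G hG.preconnected v
  have hstep (i : ℕ) (hi : i ∈ range r) : conductance G (ball G v i) ≤
      2 * (log (vol G (ball G v (i + 1))) - log (vol G (ball G v i))) := by
    have hhalf : (vol G (ball G v i) : ℝ) ≤ vol G univ / 2 :=
      le_trans (mod_cast vol_mono G (ball_mono G v (mem_range.mp hi).le)) hvol
    exact conductance_le_two_mul_log_sub G (hpos i) (vol_le_vol_compl_of_le_half G hhalf)
      (cut_ball_add_vol_le G v i)
  constructor
  · calc ∑ i ∈ range r, conductance G (ball G v i)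
        ≤ ∑ i ∈ range r, 2 * (log (vol G (ball G v (i + 1))) - log (vol G (ball G v i))) :=
          sum_le_sum hstep
      _ = 2 * (log (vol G (ball G v r)) - log (vol G (ball G v 0))) := by
          rw [← mul_sum, sum_range_sub (fun i => log (vol G (ball G v i)))]
      _ ≤ 2 * log (vol G (ball G v r)) := by
          have : 0 ≤ log (vol G (ball G v 0)) := log_nonneg (mod_cast hpos 0)
          linarith
  · have hle : (vol G (ball G v r) : ℝ) ≤ (Fintype.card V : ℝ) ^ 2 :=
      mod_cast (vol_mono G (subset_univ _)).trans (vol_univ_le_card_sq G)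
    calc 2 * log (vol G (ball G v r)) ≤ 2 * log ((Fintype.card V : ℝ) ^ 2) := by
          gcongr
          exact_mod_cast hpos r
      _ = 4 * log (Fintype.card V) := by rw [log_pow]; ring

/-- `Σ_{i<r} φ(B(v,i)) ≤ 2 log(vol(B(v,r))) ≤ 4 log n`. -/
theorem sum_conductance_balls_le (G : SimpleGraph V) [DecidableRel G.Adj] (hG : G.Connected)
    (hn : 2 ≤ Fintype.card V) (v : V) (r : ℕ) (hr : 1 ≤ r)
    (hvol : (vol G (ball G v r) : ℝ) ≤ (vol G Finset.univ : ℝ) / 2) :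
    (∑ i ∈ Finset.range r, conductance G (ball G v i)) ≤
        2 * Real.log (vol G (ball G v r)) ∧
      2 * Real.log (vol G (ball G v r)) ≤ 4 * Real.log (Fintype.card V) :=
  sum_conductance_balls_le_general G hG hn v r hvol
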